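/- Let n be a positive integer, q a prime, and r a positive real with r√q < q/2. If H is chosen uniformly at random from the symmetric matrices in (ℤ/qℤ)^{n×n}, then the probability that the lattice L^⊥(H) = {(z₁,z₂) ∈ ℤ^{2n} : H·z₁ ≡ z₂ mod q} contains a nonzero vector of Euclidean length less than r√q is at most σ_{2n}·(r + √(n/(2q)))^{2n}, where σ_{2n} is the volume of the 2n-dimensional unit ball. -/

import Mathlib

/-!
For a nonzero integer pair `(z₁, z₂)` of length `< r√q < q`, the reductions mod `q` are not
both zero. If `z₁ ≢ 0`, then `H ↦ H z₁` maps the symmetric matrices onto `(ℤ/qℤ)ⁿ` (a rank-two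
symmetric matrix hits any target), so `H z₁ ≡ z₂` holds for exactly a `q⁻ⁿ` fraction of them;
if `z₁ ≡ 0` it never holds. A union bound over the short pairs finishes the proof, once these
are counted by packing the disjoint unit cubes around them into the ball of radius
`r√q + √(2n)/2`.
-/

open MeasureTheory Metric Finset Matrix

section LatticePointCount

variable {ι : Type*}

noncomputable def roundCoords (x : EuclideanSpace ℝ ι) : ι → ℤ := fun i ↦ round (x i)

theorem roundCoords_preimage_singleton (w : ι → ℤ) :
    roundCoords ⁻¹' {w} =
      WithLp.ofLp ⁻¹' Set.univ.pi fun i ↦ Set.Ico ((w i : ℝ) - 1 / 2) (w i + 1 / 2) := by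
  ext x
  simp [roundCoords, funext_iff, round_eq_iff]

variable [Fintype ι]

theorem measurableSet_roundCoords_preimage_singleton (w : ι → ℤ) :
    MeasurableSet (roundCoords ⁻¹' {w}) := by
  rw [roundCoords_preimage_singleton]
  exact WithLp.measurable_ofLp 2 _ (.univ_pi fun _ ↦ measurableSet_Ico)

theorem volume_roundCoords_preimage_singleton (w : ι → ℤ) :
    volume (roundCoords ⁻¹' {w}) = 1 := by
  rw [roundCoords_preimage_singleton, (PiLp.volume_preserving_ofLp ι).measure_preimage
    (MeasurableSet.univ_pi fun _ ↦ measurableSet_Ico).nullMeasurableSet, volume_pi_pi]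
  norm_num [Real.volume_Ico]

theorem norm_le_sqrt_sum_roundCoords_sq_add (x : EuclideanSpace ℝ ι) :
    ‖x‖ ≤ √(∑ i, (roundCoords x i : ℝ) ^ 2) + √(Fintype.card ι) / 2 := by
  set y : EuclideanSpace ℝ ι := WithLp.toLp 2 fun i ↦ (roundCoords x i : ℝ)
  have hy : ‖y‖ = √(∑ i, (roundCoords x i : ℝ) ^ 2) := by
    simp [y, EuclideanSpace.norm_eq, sq_abs]
  have hxy : ‖x - y‖ ≤ √(Fintype.card ι) / 2 := by
    rw [EuclideanSpace.norm_eq, ← Real.sqrt_sq (by norm_num : (0 : ℝ) ≤ 2),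
      ← Real.sqrt_div' _ (by norm_num)]
    gcongr
    calc ∑ i, ‖(x - y) i‖ ^ 2 ≤ ∑ _i : ι, (1 / 2 : ℝ) ^ 2 := by
          gcongr with i
          simpa [y, roundCoords, Real.norm_eq_abs] using abs_sub_round (x i)
      _ = Fintype.card ι / 2 ^ 2 := by rw [sum_const, card_univ, nsmul_eq_mul]; ring
  calc ‖x‖ ≤ ‖y‖ + ‖x - y‖ := norm_le_norm_add_norm_sub' x y
    _ ≤ _ := by rw [hy]; gcongr

theorem finite_setOf_sqrt_sum_sq_lt (R : ℝ) :
    {w : ι → ℤ | √(∑ i, (w i : ℝ) ^ 2) < R}.Finite := by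
  classical
  refine (Set.finite_Icc (-fun _ ↦ ⌈R⌉) fun _ ↦ ⌈R⌉).subset fun w hw ↦ ?_
  have hle (i : ι) : |w i| ≤ ⌈R⌉ := by
    have : |(w i : ℝ)| < R := (Real.abs_le_sqrt
      (single_le_sum (fun j _ ↦ sq_nonneg (w j : ℝ)) (mem_univ i))).trans_lt hw
    exact_mod_cast this.le.trans (Int.le_ceil R)
  exact ⟨fun i ↦ neg_le_of_abs_le (hle i), fun i ↦ le_of_abs_le (hle i)⟩

open scoped ENNReal in
theorem ncard_setOf_sqrt_sum_sq_lt_le (R : ℝ) :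
    ({w : ι → ℤ | √(∑ i, (w i : ℝ) ^ 2) < R}.ncard : ℝ) ≤
      (volume (closedBall (0 : EuclideanSpace ℝ ι) (R + √(Fintype.card ι) / 2))).toReal := by
  set S := {w : ι → ℤ | √(∑ i, (w i : ℝ) ^ 2) < R}
  have hS : S.Finite := finite_setOf_sqrt_sum_sq_lt R
  -- the unit cubes around the points of `S` are disjoint and lie in the enlarged ball
  have hvol : (S.ncard : ℝ≥0∞) ≤
      volume (closedBall (0 : EuclideanSpace ℝ ι) (R + √(Fintype.card ι) / 2)) :=
    calc (S.ncard : ℝ≥0∞)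
        = ∑ w ∈ hS.toFinset, volume (roundCoords ⁻¹' {w} : Set (EuclideanSpace ℝ ι)) := by
          simp [volume_roundCoords_preimage_singleton, Set.ncard_eq_toFinset_card _ hS]
      _ = volume (roundCoords ⁻¹' hS.toFinset : Set (EuclideanSpace ℝ ι)) :=
          sum_measure_preimage_singleton _ fun w _ ↦ measurableSet_roundCoords_preimage_singleton w
      _ ≤ _ := measure_mono fun x hx ↦ by
          rw [mem_closedBall_zero_iff]
          refine (norm_le_sqrt_sum_roundCoords_sq_add x).trans ?_
          gcongr
          exact (hS.mem_toFinset.1 hx).le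
  simpa using ENNReal.toReal_mono measure_closedBall_lt_top.ne hvol

def shortPairs (m n : ℕ) (R : ℝ) : Set ((Fin m → ℤ) × (Fin n → ℤ)) :=
  {z | √(∑ i, (z.1 i : ℝ) ^ 2 + ∑ i, (z.2 i : ℝ) ^ 2) < R}

theorem shortPairs_eq_preimage_appendEquiv (m n : ℕ) (R : ℝ) :
    shortPairs m n R =
      Fin.appendEquiv m n ⁻¹' {w : Fin (m + n) → ℤ | √(∑ i, (w i : ℝ) ^ 2) < R} := by
  ext z
  simp [shortPairs, Fin.sum_univ_add]

theorem finite_shortPairs (m n : ℕ) (R : ℝ) : (shortPairs m n R).Finite := by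
  rw [shortPairs_eq_preimage_appendEquiv]
  exact (finite_setOf_sqrt_sum_sq_lt R).preimage (Fin.appendEquiv m n).injective.injOn

theorem ncard_shortPairs_le (m n : ℕ) (R : ℝ) :
    ((shortPairs m n R).ncard : ℝ) ≤
      (volume (closedBall (0 : EuclideanSpace ℝ (Fin (m + n)))
        (R + √(m + n : ℕ) / 2))).toReal := by
  rw [shortPairs_eq_preimage_appendEquiv,
    Set.ncard_preimage_of_injective_subset_range (Fin.appendEquiv m n).injective (by simp)]
  simpa using ncard_setOf_sqrt_sum_sq_lt_le (ι := Fin (m + n)) R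

end LatticePointCount

namespace Matrix

variable {ι K : Type*} [Fintype ι]

def isSymmAddSubgroup (ι α : Type*) [AddGroup α] : AddSubgroup (Matrix ι ι α) where
  carrier := {H | H.IsSymm}
  add_mem' := IsSymm.add
  zero_mem' := isSymm_zero
  neg_mem' := IsSymm.neg

variable [Field K]

theorem exists_isSymm_mulVec_eq {z : ι → K} (hz : z ≠ 0) (t : ι → K) :
    ∃ H : Matrix ι ι K, H.IsSymm ∧ H *ᵥ z = t := by
  classical
  obtain ⟨i, hi⟩ := Function.ne_iff.mp hz
  -- `(t eᵀ + e tᵀ) z = (z i) t + (t ⬝ᵥ z) e`, and the `e eᵀ` term cancels the second summand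
  set e : ι → K := Pi.single i 1
  have he : e ⬝ᵥ z = z i := by simp [e]
  set A := vecMulVec t e
  refine ⟨(z i)⁻¹ • (A + Aᵀ) - ((z i)⁻¹ * (z i)⁻¹ * (t ⬝ᵥ z)) • vecMulVec e e,
    ((isSymm_add_transpose_self A).smul _).sub (IsSymm.smul (transpose_vecMulVec e e) _), ?_⟩
  simp only [A, transpose_vecMulVec, sub_mulVec, add_mulVec, smul_mulVec, vecMulVec_mulVec, he,
    op_smul_eq_smul, smul_add, smul_smul]
  rw [inv_mul_cancel₀ hi, one_smul, add_sub_assoc, ← sub_smul,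
    show (z i)⁻¹ * (t ⬝ᵥ z) - (z i)⁻¹ * (z i)⁻¹ * (t ⬝ᵥ z) * z i = 0 by field_simp; ring,
    zero_smul, add_zero]

variable [Fintype K]

theorem card_isSymm_mulVec_eq_mul {z : ι → K} (hz : z ≠ 0) (t : ι → K) :
    Nat.card {H : Matrix ι ι K // H.IsSymm ∧ H *ᵥ z = t} * Fintype.card K ^ Fintype.card ι =
      Nat.card {H : Matrix ι ι K // H.IsSymm} := by
  classical
  let f := (mulVec.addMonoidHomLeft z).comp (isSymmAddSubgroup ι K).subtype
  have hf : Function.Surjective f := fun y ↦ by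
    obtain ⟨H, hH, rfl⟩ := exists_isSymm_mulVec_eq hz y
    exact ⟨⟨H, hH⟩, rfl⟩
  have hfiber : Nat.card {H : Matrix ι ι K // H.IsSymm ∧ H *ᵥ z = t} = #{g | f g = t} := by
    rw [← Fintype.card_subtype, ← Nat.card_eq_fintype_card]
    exact Nat.card_congr (Equiv.subtypeSubtypeEquivSubtypeInter _ _).symm
  rw [hfiber, ← Fintype.card_fun]
  calc #{g | f g = t} * Fintype.card (ι → K)
      = ∑ y : ι → K, #{g | f g = y} := by
        rw [mul_comm, ← card_univ, sum_const_nat fun y _ ↦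
          AddMonoidHom.card_fiber_eq_of_mem_range f (hf y) (hf t)]
    _ = Fintype.card (isSymmAddSubgroup ι K) :=
        (card_eq_sum_card_fiberwise fun _ _ ↦ mem_univ _).symm
    _ = Nat.card {H : Matrix ι ι K // H.IsSymm} := (Nat.card_eq_fintype_card).symm

theorem card_isSymm_mulVec_eq_mul_le {z t : ι → K} (h : z ≠ 0 ∨ t ≠ 0) :
    Nat.card {H : Matrix ι ι K // H.IsSymm ∧ H *ᵥ z = t} * Fintype.card K ^ Fintype.card ι ≤
      Nat.card {H : Matrix ι ι K // H.IsSymm} := by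
  rcases eq_or_ne z 0 with rfl | hz
  · have : IsEmpty {H : Matrix ι ι K // H.IsSymm ∧ H *ᵥ 0 = t} :=
      ⟨fun H ↦ h.resolve_left (not_not.2 rfl) (by rw [← H.2.2, mulVec_zero])⟩
    rw [Nat.card_of_isEmpty, zero_mul]
    exact Nat.zero_le _
  · exact (card_isSymm_mulVec_eq_mul hz t).le

theorem card_isSymm_exists_mulVec_eq_mul_le {α : Type*} {S : Set α} (hS : S.Finite)
    {v w : α → ι → K} (h : ∀ a ∈ S, v a ≠ 0 ∨ w a ≠ 0) :
    Nat.card {H : Matrix ι ι K // H.IsSymm ∧ ∃ a ∈ S, H *ᵥ v a = w a} *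
        Fintype.card K ^ Fintype.card ι ≤
      S.ncard * Nat.card {H : Matrix ι ι K // H.IsSymm} := by
  classical
  have union_bound : Nat.card {H : Matrix ι ι K // H.IsSymm ∧ ∃ a ∈ S, H *ᵥ v a = w a} ≤
      ∑ a ∈ hS.toFinset, Nat.card {H : Matrix ι ι K // H.IsSymm ∧ H *ᵥ v a = w a} := by
    simp only [Nat.card_eq_fintype_card, Fintype.card_subtype]
    refine (card_le_card fun H hH ↦ ?_).trans card_biUnion_le
    obtain ⟨hH, a, ha, hHa⟩ := (mem_filter.1 hH).2
    exact mem_biUnion.2 ⟨a, hS.mem_toFinset.2 ha, mem_filter.2 ⟨mem_univ _, hH, hHa⟩⟩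
  calc _ ≤ ∑ a ∈ hS.toFinset, Nat.card {H : Matrix ι ι K // H.IsSymm ∧ H *ᵥ v a = w a} *
        Fintype.card K ^ Fintype.card ι := by
        rw [← sum_mul]
        exact Nat.mul_le_mul_right _ union_bound
    _ ≤ ∑ _a ∈ hS.toFinset, Nat.card {H : Matrix ι ι K // H.IsSymm} :=
        sum_le_sum fun a ha ↦ card_isSymm_mulVec_eq_mul_le (h a (hS.mem_toFinset.1 ha))
    _ = _ := by rw [sum_const, smul_eq_mul, Set.ncard_eq_toFinset_card _ hS]

end Matrix

theorem intCast_ne_zero_of_abs_lt {ι : Type*} {q : ℕ} {v : ι → ℤ} (hv : v ≠ 0)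
    (h : ∀ i, |v i| < q) : (fun i ↦ (v i : ZMod q)) ≠ 0 := by
  contrapose! hv
  funext i
  exact Int.eq_zero_of_abs_lt_dvd
    ((ZMod.intCast_zmod_eq_zero_iff_dvd _ _).1 (congrFun hv i)) (h i)

theorem intCast_ne_zero_or_of_mem_shortPairs {n q : ℕ} {z : (Fin n → ℤ) × (Fin n → ℤ)}
    {R : ℝ} (hz : z ≠ 0) (hshort : z ∈ shortPairs n n R) (hR : R ≤ q) :
    (fun i ↦ (z.1 i : ZMod q)) ≠ 0 ∨ (fun i ↦ (z.2 i : ZMod q)) ≠ 0 := by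
  have coord_lt (v : Fin n → ℤ)
      (hv : ∑ i, (v i : ℝ) ^ 2 ≤ ∑ i, (z.1 i : ℝ) ^ 2 + ∑ i, (z.2 i : ℝ) ^ 2) (i : Fin n) :
      |v i| < q := by
    have := (Real.abs_le_sqrt ((single_le_sum (fun j _ ↦ sq_nonneg (v j : ℝ)) (mem_univ i)).trans
      hv)).trans_lt (hshort.trans_le hR)
    exact_mod_cast this
  have hz' : z.1 ≠ 0 ∨ z.2 ≠ 0 := by
    contrapose! hz
    exact Prod.ext hz.1 hz.2
  exact hz'.imp
    (intCast_ne_zero_of_abs_lt · (coord_lt _ (le_add_of_nonneg_right (by positivity))))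
    (intCast_ne_zero_of_abs_lt · (coord_lt _ (le_add_of_nonneg_left (by positivity))))

theorem card_isSymm_exists_shortPair_mulVec_eq_mul_le {n q : ℕ} (hq : q.Prime) {R : ℝ}
    (hR : R ≤ q) :
    Nat.card {H : Matrix (Fin n) (Fin n) (ZMod q) // H.IsSymm ∧
        ∃ z₁ z₂ : Fin n → ℤ, (z₁, z₂) ≠ 0 ∧ √(∑ i, (z₁ i : ℝ) ^ 2 + ∑ i, (z₂ i : ℝ) ^ 2) < R ∧
          H *ᵥ (fun i ↦ (z₁ i : ZMod q)) = fun i ↦ (z₂ i : ZMod q)} * q ^ n ≤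
      (shortPairs n n R).ncard * Nat.card {H : Matrix (Fin n) (Fin n) (ZMod q) // H.IsSymm} := by
  have := Fact.mk hq
  have key := card_isSymm_exists_mulVec_eq_mul_le (K := ZMod q)
    ((finite_shortPairs n n R).sdiff (t := {0}))
    (v := fun z i ↦ (z.1 i : ZMod q)) (w := fun z i ↦ (z.2 i : ZMod q))
    fun z hz ↦ intCast_ne_zero_or_of_mem_shortPairs hz.2 hz.1 hR
  rw [ZMod.card, Fintype.card_fin] at key
  refine le_trans (le_of_eq ?_) (key.trans (Nat.mul_le_mul_right _
    (Set.ncard_le_ncard Set.sdiff_subset (finite_shortPairs n n R))))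
  congr 3
  ext H
  simp [shortPairs, Prod.exists, and_left_comm, and_assoc]

theorem sqrt_add_sqrt_div_two_eq {q : ℝ} (hq : 0 < q) (r n : ℝ) :
    r * √q + √(n + n) / 2 = (r + √(n / (2 * q))) * √q := by
  rw [add_mul, ← Real.sqrt_mul' _ hq.le,
    show n / (2 * q) * q = (n + n) / 2 ^ 2 by field_simp; ring,
    Real.sqrt_div' _ (by norm_num), Real.sqrt_sq (by norm_num)]

theorem ncard_shortPairs_le_mul (n : ℕ) {q r : ℝ} (hq : 0 < q) (hr : 0 ≤ r) :
    ((shortPairs n n (r * √q)).ncard : ℝ) ≤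
      (volume (closedBall (0 : EuclideanSpace ℝ (Fin (2 * n))) 1)).toReal *
        (r + √(n / (2 * q))) ^ (2 * n) * q ^ n := by
  refine (ncard_shortPairs_le n n _).trans_eq ?_
  rw [Measure.addHaar_closedBall' _ _ (by positivity), finrank_euclideanSpace_fin, Nat.cast_add,
    sqrt_add_sqrt_div_two_eq hq, ← two_mul, ENNReal.toReal_mul,
    ENNReal.toReal_ofReal (by positivity), mul_pow, pow_mul √q 2 n, Real.sq_sqrt hq.le]
  ring

theorem stmt10_general (n q : ℕ) (hq : q.Prime) (r : ℝ) (hr : 0 < r)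
    (hrq : r * Real.sqrt q < q / 2) :
    (Nat.card {H : Matrix (Fin n) (Fin n) (ZMod q) // H.IsSymm ∧
        ∃ z₁ z₂ : Fin n → ℤ, (z₁, z₂) ≠ 0 ∧
          Real.sqrt (∑ i, (z₁ i : ℝ) ^ 2 + ∑ i, (z₂ i : ℝ) ^ 2) < r * Real.sqrt q ∧
          H.mulVec (fun i => (z₁ i : ZMod q)) = fun i => (z₂ i : ZMod q)} : ℝ) /
      (Nat.card {H : Matrix (Fin n) (Fin n) (ZMod q) // H.IsSymm} : ℝ) ≤
    (MeasureTheory.volume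
        (Metric.closedBall (0 : EuclideanSpace ℝ (Fin (2 * n))) 1)).toReal *
      (r + Real.sqrt (n / (2 * q))) ^ (2 * n) := by
  have hq0 : (0 : ℝ) < q := Nat.cast_pos.2 hq.pos
  have hbad := card_isSymm_exists_shortPair_mulVec_eq_mul_le (n := n) hq
    (R := r * √q) (by linarith)
  have hcount := ncard_shortPairs_le_mul n hq0 hr.le
  have := Fact.mk hq
  have : Nonempty {H : Matrix (Fin n) (Fin n) (ZMod q) // H.IsSymm} := ⟨⟨0, isSymm_zero⟩⟩
  rw [div_le_iff₀ (Nat.cast_pos.2 Nat.card_pos)]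
  refine le_of_mul_le_mul_right ?_ (pow_pos hq0 n)
  calc _ ≤ ((shortPairs n n (r * √q)).ncard : ℝ) *
          Nat.card {H : Matrix (Fin n) (Fin n) (ZMod q) // H.IsSymm} := by
        exact_mod_cast hbad
    _ ≤ _ := mul_le_mul_of_nonneg_right hcount (Nat.cast_nonneg _)
    _ = _ := by ring

/-- For `H` uniform among symmetric matrices over `ℤ/qℤ` (`q` prime) and `r√q < q/2`, the
probability that the lattice `L^⊥(H) = {(z₁,z₂) ∈ ℤ^{2n} : H z₁ ≡ z₂ mod q}` contains a
nonzero vector of length `< r√q` is at most `σ_{2n} (r + √(n/(2q)))^{2n}`. -/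
theorem stmt10 (n q : ℕ) (hn : 0 < n) (hq : q.Prime) (r : ℝ) (hr : 0 < r)
    (hrq : r * Real.sqrt q < q / 2) :
    (Nat.card {H : Matrix (Fin n) (Fin n) (ZMod q) // H.IsSymm ∧
        ∃ z₁ z₂ : Fin n → ℤ, (z₁, z₂) ≠ 0 ∧
          Real.sqrt (∑ i, (z₁ i : ℝ) ^ 2 + ∑ i, (z₂ i : ℝ) ^ 2) < r * Real.sqrt q ∧
          H.mulVec (fun i => (z₁ i : ZMod q)) = fun i => (z₂ i : ZMod q)} : ℝ) /
      (Nat.card {H : Matrix (Fin n) (Fin n) (ZMod q) // H.IsSymm} : ℝ) ≤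
    (MeasureTheory.volume
        (Metric.closedBall (0 : EuclideanSpace ℝ (Fin (2 * n))) 1)).toReal *
      (r + Real.sqrt (n / (2 * q))) ^ (2 * n) :=
  stmt10_general n q hq r hr hrq
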